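/- arXiv:math/0512008 — 2 statements merged into one kernel-verified Lean document; each statement's English description precedes it below -/
import Mathlib

section
/- For all smooth vector fields u and ξ on ℝ^n the following identity holds pointwise: u^j (u^i ξ^k_{|i})_{|j} = R^k_{ijl} u^i u^j ξ^l + ξ^k_{|i} (u^i_{|j} u^j) + u^i u^j (Tξ)^k_{i|j} + u^i u^j £_ξ Γ^k_{ij}, where u^i ξ^k_{|i} is a vector field whose covariant derivative (·)_{|j} is taken as that of a vector field, and (Tξ)^k_i := T^k_{il} ξ^l is a (1,1)-tensor field. -/
open scoped BigOperators

noncomputable section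

/-- Partial derivative `∂_j f` of a scalar function on `ℝ^n`. -/
def pd {n : ℕ} (j : Fin n) (f : (Fin n → ℝ) → ℝ) (x : Fin n → ℝ) : ℝ :=
  fderiv ℝ f x (Pi.single j 1)

private lemma c2 {n : ℕ} {f g : Fin n → Fin n → ℝ} (h : ∀ a b, f a b = g a b) :
    ∑ a, ∑ b, f a b = ∑ a, ∑ b, g a b :=
  Finset.sum_congr rfl fun a _ => Finset.sum_congr rfl fun b _ => h a b

private lemma c3 {n : ℕ} {f g : Fin n → Fin n → Fin n → ℝ} (h : ∀ a b c, f a b c = g a b c) :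
    ∑ a, ∑ b, ∑ c, f a b c = ∑ a, ∑ b, ∑ c, g a b c :=
  Finset.sum_congr rfl fun a _ => c2 (h a)

private lemma c4 {n : ℕ} {f g : Fin n → Fin n → Fin n → Fin n → ℝ}
    (h : ∀ a b c d, f a b c d = g a b c d) :
    ∑ a, ∑ b, ∑ c, ∑ d, f a b c d = ∑ a, ∑ b, ∑ c, ∑ d, g a b c d :=
  Finset.sum_congr rfl fun a _ => c3 (h a)

theorem key {n : ℕ} (U X : Fin n → ℝ) (g : Fin n → Fin n → Fin n → ℝ)
    (dU dX : Fin n → Fin n → ℝ) (dg : Fin n → Fin n → Fin n → Fin n → ℝ)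
    (ddX : Fin n → Fin n → Fin n → ℝ) (k : Fin n) :
    (∑ j, U j * ((∑ i, (dU i j * (dX k i + ∑ m, g k m i * X m)
        + U i * (ddX k i j + ∑ m, (dg k m i j * X m + g k m i * dX m j))))
      + ∑ m, g k m j * ∑ i, U i * (dX m i + ∑ l, g m l i * X l)))
    = (∑ i, ∑ j, ∑ l, (dg k i l j - dg k i j l
          + ∑ m, g m i l * g k m j - ∑ m, g m i j * g k m l) * U i * U j * X l)
      + (∑ i, (dX k i + ∑ m, g k m i * X m) * ∑ j, (dU i j + ∑ m, g i m j * U m) * U j)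
      + (∑ i, ∑ j, U i * U j * ((∑ l, ((dg k l i j - dg k i l j) * X l
            + (g k l i - g k i l) * dX l j))
          + ∑ m, g k m j * (∑ l, (g m l i - g m i l) * X l)
          - ∑ m, g m i j * (∑ l, (g k l m - g k m l) * X l)))
      + (∑ i, ∑ j, U i * U j * (ddX k i j + ∑ m, X m * dg k i j m
          - ∑ m, g m i j * dX k m + ∑ m, g k m j * dX m i + ∑ m, g k i m * dX m j)) := by
  simp only [Finset.mul_sum, Finset.sum_mul, mul_add, add_mul, mul_sub, sub_mul,
    Finset.sum_add_distrib, Finset.sum_sub_distrib]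
  -- h1 : L1 = R7
  have h1 : (∑ x : Fin n, ∑ i : Fin n, U x * (dU i x * dX k i))
      = ∑ x : Fin n, ∑ x1 : Fin n, dX k x * (dU x x1 * U x1) := by
    refine Finset.sum_comm.trans ?_
    exact c2 fun a b => by ring
  -- h2 : L2 = R8  (swap outer two of three)
  have h2 : (∑ x : Fin n, ∑ x1 : Fin n, ∑ i : Fin n, U x * (dU x1 x * (g k i x1 * X i)))
      = ∑ x : Fin n, ∑ x1 : Fin n, ∑ i : Fin n, g k i x * X i * (dU x x1 * U x1) := by
    refine Finset.sum_comm.trans ?_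
    exact c3 fun a b c => by ring
  -- h3 : L3 = R5
  have h3 : (∑ x : Fin n, ∑ i : Fin n, U x * (U i * ddX k i x))
      = ∑ x : Fin n, ∑ x1 : Fin n, U x * U x1 * ddX k x x1 := by
    refine Finset.sum_comm.trans ?_
    exact c2 fun a b => by ring
  -- h4 : L4 = R11 (swap outer two of three)
  have h4 : (∑ x : Fin n, ∑ x1 : Fin n, ∑ i : Fin n, U x * (U x1 * (dg k i x1 x * X i)))
      = ∑ x : Fin n, ∑ x1 : Fin n, ∑ i : Fin n, U x * U x1 * (dg k i x x1 * X i) := by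
    refine Finset.sum_comm.trans ?_
    exact c3 fun a b c => by ring
  -- h5 : L5 = R6 (pure reorder)
  have h5 : (∑ x : Fin n, ∑ x1 : Fin n, ∑ i : Fin n, U x * (U x1 * (g k i x1 * dX i x)))
      = ∑ x : Fin n, ∑ x1 : Fin n, ∑ i : Fin n, U x * U x1 * (g k i x1 * dX i x) :=
    c3 fun a b c => by ring
  -- h6 : L6 = R13 (swap inner two of three)
  have h6 : (∑ x : Fin n, ∑ x1 : Fin n, ∑ i : Fin n, U x * (g k x1 x * (U i * dX x1 i)))
      = ∑ x : Fin n, ∑ x1 : Fin n, ∑ i : Fin n, U x * U x1 * (g k i x * dX i x1) := by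
    refine (Finset.sum_congr rfl fun x _ => Finset.sum_comm).trans ?_
    exact c3 fun a b c => by ring
  -- h7 : L7 = R14 : (a,c,b,d) -> swap lvl 2,3 -> (a,b,c,d) -> swap lvl 1,2 -> (b,a,c,d)
  have h7 : (∑ x : Fin n, ∑ x1 : Fin n, ∑ x2 : Fin n, ∑ i : Fin n,
        U x * (g k x1 x * (U x2 * (g x1 i x2 * X i))))
      = ∑ x : Fin n, ∑ x1 : Fin n, ∑ x2 : Fin n, ∑ i : Fin n,
        U x * U x1 * (g k x2 x1 * (g x2 i x * X i)) := by
    refine (Finset.sum_congr rfl fun x _ => Finset.sum_comm).trans ?_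
    refine Finset.sum_comm.trans ?_
    exact c4 fun a b c d => by ring
  -- h8 : R1 = R12 (pure reorder)
  have h8 : (∑ x : Fin n, ∑ x1 : Fin n, ∑ x2 : Fin n, dg k x x2 x1 * U x * U x1 * X x2)
      = ∑ x : Fin n, ∑ x1 : Fin n, ∑ i : Fin n, U x * U x1 * (dg k x i x1 * X i) :=
    c3 fun a b c => by ring
  -- h9 : R2 = R18 (pure reorder)
  have h9 : (∑ x : Fin n, ∑ x1 : Fin n, ∑ x2 : Fin n, dg k x x1 x2 * U x * U x1 * X x2)
      = ∑ x : Fin n, ∑ x1 : Fin n, ∑ i : Fin n, U x * U x1 * (X i * dg k x x1 i) :=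
    c3 fun a b c => by ring
  -- h10 : R9 = R19 (swap levels 1 and 3 of three)
  have h10 : (∑ x : Fin n, ∑ x1 : Fin n, ∑ x2 : Fin n, dX k x * (g x x2 x1 * U x2 * U x1))
      = ∑ x : Fin n, ∑ x1 : Fin n, ∑ i : Fin n, U x * U x1 * (g i x x1 * dX k i) := by
    refine Finset.sum_comm.trans ?_
    refine (Finset.sum_congr rfl fun x _ => Finset.sum_comm).trans ?_
    refine Finset.sum_comm.trans ?_
    exact c3 fun a b c => by ring
  -- h11 : R3 = R15 (swap last two of four)
  have h11 : (∑ x : Fin n, ∑ x1 : Fin n, ∑ x2 : Fin n, ∑ i : Fin n,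
        g i x x2 * g k i x1 * U x * U x1 * X x2)
      = ∑ x : Fin n, ∑ x1 : Fin n, ∑ x2 : Fin n, ∑ i : Fin n,
        U x * U x1 * (g k x2 x1 * (g x2 x i * X i)) := by
    refine (Finset.sum_congr rfl fun x _ => Finset.sum_congr rfl fun y _ =>
      Finset.sum_comm).trans ?_
    exact c4 fun a b c d => by ring
  -- h12 : R4 = R16b (swap last two of four)
  have h12 : (∑ x : Fin n, ∑ x1 : Fin n, ∑ x2 : Fin n, ∑ i : Fin n,
        g i x x1 * g k i x2 * U x * U x1 * X x2)
      = ∑ x : Fin n, ∑ x1 : Fin n, ∑ x2 : Fin n, ∑ i : Fin n,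
        U x * U x1 * (g x2 x x1 * (g k x2 i * X i)) := by
    refine (Finset.sum_congr rfl fun x _ => Finset.sum_congr rfl fun y _ =>
      Finset.sum_comm).trans ?_
    exact c4 fun a b c d => by ring
  -- h13 : R10 = R16a (swap levels 1 and 3 of four)
  have h13 : (∑ x : Fin n, ∑ x1 : Fin n, ∑ x2 : Fin n, ∑ i : Fin n,
        g k i x * X i * (g x x2 x1 * U x2 * U x1))
      = ∑ x : Fin n, ∑ x1 : Fin n, ∑ x2 : Fin n, ∑ i : Fin n,
        U x * U x1 * (g x2 x x1 * (g k i x2 * X i)) := by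
    refine Finset.sum_comm.trans ?_
    refine (Finset.sum_congr rfl fun x _ => Finset.sum_comm).trans ?_
    refine Finset.sum_comm.trans ?_
    exact c4 fun a b c d => by ring
  linear_combination h1 + h2 + h3 + h4 + h5 + h6 + h7 - h8 + h9 - h10 - h11 + h12 - h13

lemma contDiff_pd {n : ℕ} {f : (Fin n → ℝ) → ℝ} (hf : ContDiff ℝ (⊤ : ℕ∞) f) (i : Fin n) :
    ContDiff ℝ (⊤ : ℕ∞) (pd i f) :=
  (ContinuousLinearMap.apply ℝ ℝ (Pi.single i 1 : Fin n → ℝ)).contDiff.comp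
    (hf.fderiv_right (by simp))

lemma pd_add {n : ℕ} {f g : (Fin n → ℝ) → ℝ} {x : Fin n → ℝ}
    (hf : DifferentiableAt ℝ f x) (hg : DifferentiableAt ℝ g x) (j : Fin n) :
    pd j (fun y => f y + g y) x = pd j f x + pd j g x := by
  unfold pd; rw [fderiv_fun_add hf hg]; simp

lemma pd_sub {n : ℕ} {f g : (Fin n → ℝ) → ℝ} {x : Fin n → ℝ}
    (hf : DifferentiableAt ℝ f x) (hg : DifferentiableAt ℝ g x) (j : Fin n) :
    pd j (fun y => f y - g y) x = pd j f x - pd j g x := by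
  unfold pd; rw [fderiv_fun_sub hf hg]; simp

lemma pd_mul {n : ℕ} {f g : (Fin n → ℝ) → ℝ} {x : Fin n → ℝ}
    (hf : DifferentiableAt ℝ f x) (hg : DifferentiableAt ℝ g x) (j : Fin n) :
    pd j (fun y => f y * g y) x = pd j f x * g x + f x * pd j g x := by
  unfold pd; rw [fderiv_fun_mul hf hg]; simp; ring

lemma pd_sum {n : ℕ} {F : Fin n → (Fin n → ℝ) → ℝ} {x : Fin n → ℝ}
    (hF : ∀ m, DifferentiableAt ℝ (F m) x) (j : Fin n) :
    pd j (fun y => ∑ m, F m y) x = ∑ m, pd j (F m) x := by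
  unfold pd; rw [fderiv_fun_sum fun m _ => hF m]; simp

/-- Covariant derivative of a vector field: `ξ^k_{|j} = ∂_j ξ^k + Γ^k_{mj} ξ^m`. -/
def covV {n : ℕ} (Γ : Fin n → Fin n → Fin n → (Fin n → ℝ) → ℝ)
    (ξ : Fin n → (Fin n → ℝ) → ℝ) (k j : Fin n) (x : Fin n → ℝ) : ℝ :=
  pd j (ξ k) x + ∑ m, Γ k m j x * ξ m x

/-- Covariant derivative of a (1,1)-tensor field:
`A^k_{i|j} = ∂_j A^k_i + Γ^k_{mj} A^m_i − Γ^m_{ij} A^k_m`. -/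
def covT {n : ℕ} (Γ : Fin n → Fin n → Fin n → (Fin n → ℝ) → ℝ)
    (A : Fin n → Fin n → (Fin n → ℝ) → ℝ) (k i j : Fin n) (x : Fin n → ℝ) : ℝ :=
  pd j (A k i) x + ∑ m, Γ k m j x * A m i x - ∑ m, Γ m i j x * A k m x

/-- Curvature tensor
`R^k_{ijl} = ∂_j Γ^k_{il} − ∂_l Γ^k_{ij} + Γ^n_{il} Γ^k_{nj} − Γ^n_{ij} Γ^k_{nl}`. -/
def curv {n : ℕ} (Γ : Fin n → Fin n → Fin n → (Fin n → ℝ) → ℝ)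
    (k i j l : Fin n) (x : Fin n → ℝ) : ℝ :=
  pd j (Γ k i l) x - pd l (Γ k i j) x
    + ∑ m, Γ m i l x * Γ k m j x - ∑ m, Γ m i j x * Γ k m l x

/-- Torsion tensor `T^k_{ij} = Γ^k_{ji} − Γ^k_{ij}`. -/
def tor {n : ℕ} (Γ : Fin n → Fin n → Fin n → (Fin n → ℝ) → ℝ)
    (k i j : Fin n) (x : Fin n → ℝ) : ℝ :=
  Γ k j i x - Γ k i j x

/-- Lie derivative of a vector field: `(£_ξ u)^k = ξ^j ∂_j u^k − u^j ∂_j ξ^k`. -/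
def lieV {n : ℕ} (ξ u : Fin n → (Fin n → ℝ) → ℝ) (k : Fin n) (x : Fin n → ℝ) : ℝ :=
  ∑ j, ξ j x * pd j (u k) x - ∑ j, u j x * pd j (ξ k) x

/-- Lie derivative of a (1,1)-tensor field:
`(£_ξ A)^k_i = ξ^m ∂_m A^k_i − A^m_i ∂_m ξ^k + A^k_m ∂_i ξ^m`. -/
def lieT {n : ℕ} (ξ : Fin n → (Fin n → ℝ) → ℝ)
    (A : Fin n → Fin n → (Fin n → ℝ) → ℝ) (k i : Fin n) (x : Fin n → ℝ) : ℝ :=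
  ∑ m, ξ m x * pd m (A k i) x - ∑ m, A m i x * pd m (ξ k) x
    + ∑ m, A k m x * pd i (ξ m) x

/-- Lie derivative of the connection coefficients:
`£_ξ Γ^k_{ij} = ∂_j ∂_i ξ^k + ξ^m ∂_m Γ^k_{ij} − Γ^m_{ij} ∂_m ξ^k
  + Γ^k_{mj} ∂_i ξ^m + Γ^k_{im} ∂_j ξ^m`. -/
def lieC {n : ℕ} (ξ : Fin n → (Fin n → ℝ) → ℝ)
    (Γ : Fin n → Fin n → Fin n → (Fin n → ℝ) → ℝ)
    (k i j : Fin n) (x : Fin n → ℝ) : ℝ :=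
  pd j (fun y => pd i (ξ k) y) x + ∑ m, ξ m x * pd m (Γ k i j) x
    - ∑ m, Γ m i j x * pd m (ξ k) x + ∑ m, Γ k m j x * pd i (ξ m) x
    + ∑ m, Γ k i m x * pd j (ξ m) x

/-- the projected identity
`u^j (u^i ξ^k_{|i})_{|j} = R^k_{ijl} u^i u^j ξ^l + ξ^k_{|i} (u^i_{|j} u^j)
  + u^i u^j (Tξ)^k_{i|j} + u^i u^j £_ξ Γ^k_{ij}`. -/
theorem projected_identity {n : ℕ} (hn : 0 < n)
    (Γ : Fin n → Fin n → Fin n → (Fin n → ℝ) → ℝ)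
    (u ξ : Fin n → (Fin n → ℝ) → ℝ)
    (hΓ : ∀ k i j, ContDiff ℝ (⊤ : ℕ∞) (Γ k i j))
    (hu : ∀ k, ContDiff ℝ (⊤ : ℕ∞) (u k))
    (hξ : ∀ k, ContDiff ℝ (⊤ : ℕ∞) (ξ k)) :
    ∀ (x : Fin n → ℝ) (k : Fin n),
      (∑ j, u j x * covV Γ (fun k y => ∑ i, u i y * covV Γ ξ k i y) k j x) =
        (∑ i, ∑ j, ∑ l, curv Γ k i j l x * u i x * u j x * ξ l x)
          + (∑ i, covV Γ ξ k i x * (∑ j, covV Γ u i j x * u j x))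
          + (∑ i, ∑ j, u i x * u j x *
              covT Γ (fun k i y => ∑ l, tor Γ k i l y * ξ l y) k i j x)
          + (∑ i, ∑ j, u i x * u j x * lieC ξ Γ k i j x) := by
  intro x k
  have dΓ : ∀ a b c, Differentiable ℝ (Γ a b c) := fun a b c => (hΓ a b c).differentiable (by simp)
  have dU : ∀ a, Differentiable ℝ (u a) := fun a => (hu a).differentiable (by simp)
  have dX : ∀ a, Differentiable ℝ (ξ a) := fun a => (hξ a).differentiable (by simp)
  have dpdX : ∀ a i, Differentiable ℝ (pd i (ξ a)) :=
    fun a i => (contDiff_pd (hξ a) i).differentiable (by simp)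
  simp only [covV, covT, curv, tor, lieC]
  simp (disch := fun_prop) only [pd_sum, pd_mul, pd_add, pd_sub]
  exact key (fun i => u i x) (fun l => ξ l x) (fun a b c => Γ a b c x)
    (fun i j => pd j (u i) x) (fun a j => pd j (ξ a) x)
    (fun a b c j => pd j (Γ a b c) x) (fun a i j => pd j (pd i (ξ a)) x) k
end
end

section
/- Let u and ξ be smooth vector fields on ℝ^n and suppose u is autoparallel (geodesic vector field), i.e. u^j u^k_{|j} = 0 identically for all k. Then the geodesic deviation equation holds pointwise: u^j (u^i ξ^k_{|i})_{|j} = R^k_{ijl} u^i u^j ξ^l + u^n (W^k)_{|n} − u^k_{|i} (£_ξ u)^i, where W is the vector field W^k := T^k_{jl} u^j ξ^l − (£_ξ u)^k and (W^k)_{|n} is its covariant derivative as a vector field. -/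
open scoped BigOperators

noncomputable section

namespace GD
variable {n : ℕ}

lemma contDiff_pd {f : (Fin n → ℝ) → ℝ} (hf : ContDiff ℝ (⊤ : ℕ∞) f) (j : Fin n) :
    ContDiff ℝ (⊤ : ℕ∞) (pd j f) :=
  (hf.fderiv_right (by simp)).clm_apply contDiff_const

lemma da {f : (Fin n → ℝ) → ℝ} (hf : ContDiff ℝ (⊤ : ℕ∞) f) (x : Fin n → ℝ) :
    DifferentiableAt ℝ f x := (hf.differentiable (by simp)).differentiableAt

lemma pd_add {f g : (Fin n → ℝ) → ℝ} {x : Fin n → ℝ} (hf : DifferentiableAt ℝ f x)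
    (hg : DifferentiableAt ℝ g x) (j : Fin n) :
    pd j (fun y => f y + g y) x = pd j f x + pd j g x := by
  simp [pd, fderiv_fun_add hf hg]

lemma pd_sub {f g : (Fin n → ℝ) → ℝ} {x : Fin n → ℝ} (hf : DifferentiableAt ℝ f x)
    (hg : DifferentiableAt ℝ g x) (j : Fin n) :
    pd j (fun y => f y - g y) x = pd j f x - pd j g x := by
  simp [pd, fderiv_fun_sub hf hg]

lemma pd_mul {f g : (Fin n → ℝ) → ℝ} {x : Fin n → ℝ} (hf : DifferentiableAt ℝ f x)
    (hg : DifferentiableAt ℝ g x) (j : Fin n) :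
    pd j (fun y => f y * g y) x = pd j f x * g x + f x * pd j g x := by
  simp [pd, fderiv_fun_mul hf hg]; ring

lemma pd_sum {ι : Type*} {s : Finset ι} {f : ι → (Fin n → ℝ) → ℝ} {x : Fin n → ℝ}
    (h : ∀ i ∈ s, DifferentiableAt ℝ (f i) x) (j : Fin n) :
    pd j (fun y => ∑ i ∈ s, f i y) x = ∑ i ∈ s, pd j (f i) x := by
  simp [pd, fderiv_fun_sum h]

variable {Γ : Fin n → Fin n → Fin n → (Fin n → ℝ) → ℝ} {u ξ : Fin n → (Fin n → ℝ) → ℝ}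

section
variable (hΓ : ∀ k i j, ContDiff ℝ (⊤ : ℕ∞) (Γ k i j)) (hu : ∀ k, ContDiff ℝ (⊤ : ℕ∞) (u k))
  (hξ : ∀ k, ContDiff ℝ (⊤ : ℕ∞) (ξ k))
include hΓ hξ

lemma cd_cov (k i : Fin n) :
    ContDiff ℝ (⊤ : ℕ∞) (fun y => pd i (ξ k) y + ∑ m, Γ k m i y * ξ m y) :=
  (contDiff_pd (hξ k) i).add (ContDiff.sum fun m _ => (hΓ k m i).mul (hξ m))

/-- expansion of `pd j` of an (unfolded) covariant derivative. -/
lemma pd_cov (k i j : Fin n) (x : Fin n → ℝ) :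
    pd j (fun y => pd i (ξ k) y + ∑ m, Γ k m i y * ξ m y) x = pd j (pd i (ξ k)) x
      + ∑ m, (pd j (Γ k m i) x * ξ m x + Γ k m i x * pd j (ξ m) x) := by
  rw [show (fun y => pd i (ξ k) y + ∑ m, Γ k m i y * ξ m y)
      = fun y => pd i (ξ k) y + (fun z => ∑ m, Γ k m i z * ξ m z) y from rfl,
    pd_add (da (contDiff_pd (hξ k) i) x)
      (da (ContDiff.sum fun m _ => (hΓ k m i).mul (hξ m)) x),
    pd_sum (fun m _ => da ((hΓ k m i).mul (hξ m)) x)]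
  congr 1
  exact Finset.sum_congr rfl fun m _ => pd_mul (da (hΓ k m i) x) (da (hξ m) x) j

include hu

/-- expansion of `pd j (∑ i, u i * ∇ξ k i)`. -/
lemma pd_ucov (k j : Fin n) (x : Fin n → ℝ) :
    pd j (fun y => ∑ i, u i y * (pd i (ξ k) y + ∑ m, Γ k m i y * ξ m y)) x
      = ∑ i, (pd j (u i) x * (pd i (ξ k) x + ∑ m, Γ k m i x * ξ m x)
          + u i x * (pd j (pd i (ξ k)) x
            + ∑ m, (pd j (Γ k m i) x * ξ m x + Γ k m i x * pd j (ξ m) x))) := by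
  rw [show (fun y => ∑ i, u i y * (pd i (ξ k) y + ∑ m, Γ k m i y * ξ m y))
      = fun y => ∑ i, (fun z => u i z * ((fun w => pd i (ξ k) w + ∑ m, Γ k m i w * ξ m w) z)) y
      from rfl,
    pd_sum (fun i _ => da ((hu i).mul (cd_cov hΓ hξ k i)) x)]
  refine Finset.sum_congr rfl fun i _ => ?_
  rw [show (fun z => u i z * ((fun w => pd i (ξ k) w + ∑ m, Γ k m i w * ξ m w) z))
      = fun z => u i z * (fun w => pd i (ξ k) w + ∑ m, Γ k m i w * ξ m w) z from rfl,
    pd_mul (da (hu i) x) (da (cd_cov hΓ hξ k i) x), pd_cov hΓ hξ]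

/-- expansion of `pd m` of the (unfolded) W vector field. -/
lemma pd_W (k m : Fin n) (x : Fin n → ℝ) :
    pd m (fun y => (∑ j, ∑ l, (Γ k l j y - Γ k j l y) * u j y * ξ l y)
        - ((∑ j, ξ j y * pd j (u k) y) - ∑ j, u j y * pd j (ξ k) y)) x
      = (∑ j, ∑ l, (((pd m (Γ k l j) x - pd m (Γ k j l) x) * u j x
            + (Γ k l j x - Γ k j l x) * pd m (u j) x) * ξ l x
          + (Γ k l j x - Γ k j l x) * u j x * pd m (ξ l) x))
        - ((∑ j, (pd m (ξ j) x * pd j (u k) x + ξ j x * pd m (pd j (u k)) x))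
          - ∑ j, (pd m (u j) x * pd j (ξ k) x + u j x * pd m (pd j (ξ k)) x)) := by
  have cdT : ∀ j l, ContDiff ℝ (⊤ : ℕ∞) (fun y => (Γ k l j y - Γ k j l y) * u j y * ξ l y) :=
    fun j l => (((hΓ k l j).sub (hΓ k j l)).mul (hu j)).mul (hξ l)
  have cdT2 : ∀ j, ContDiff ℝ (⊤ : ℕ∞) (fun y => ∑ l, (Γ k l j y - Γ k j l y) * u j y * ξ l y) :=
    fun j => ContDiff.sum fun l _ => cdT j l
  have cdL1 : ∀ j, ContDiff ℝ (⊤ : ℕ∞) (fun y => ξ j y * pd j (u k) y) :=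
    fun j => (hξ j).mul (contDiff_pd (hu k) j)
  have cdL2 : ∀ j, ContDiff ℝ (⊤ : ℕ∞) (fun y => u j y * pd j (ξ k) y) :=
    fun j => (hu j).mul (contDiff_pd (hξ k) j)
  rw [pd_sub (da (ContDiff.sum fun j _ => cdT2 j) x)
      (da ((ContDiff.sum fun j _ => cdL1 j).sub (ContDiff.sum fun j _ => cdL2 j)) x),
    pd_sub (da (ContDiff.sum fun j _ => cdL1 j) x) (da (ContDiff.sum fun j _ => cdL2 j) x),
    pd_sum (fun j _ => da (cdT2 j) x), pd_sum (fun j _ => da (cdL1 j) x),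
    pd_sum (fun j _ => da (cdL2 j) x)]
  congr 1
  · refine Finset.sum_congr rfl fun j _ => ?_
    rw [pd_sum (fun l _ => da (cdT j l) x)]
    refine Finset.sum_congr rfl fun l _ => ?_
    rw [show (fun y => (Γ k l j y - Γ k j l y) * u j y * ξ l y)
        = fun y => (fun z => (fun w => Γ k l j w - Γ k j l w) z * u j z) y * ξ l y from rfl,
      pd_mul (da ((((hΓ k l j).sub (hΓ k j l)).mul (hu j))) x) (da (hξ l) x),
      pd_mul (da ((hΓ k l j).sub (hΓ k j l)) x) (da (hu j) x),
      pd_sub (da (hΓ k l j) x) (da (hΓ k j l) x)]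
  · congr 1
    · exact Finset.sum_congr rfl fun j _ =>
        pd_mul (da (hξ j) x) (da (contDiff_pd (hu k) j) x) m
    · exact Finset.sum_congr rfl fun j _ =>
        pd_mul (da (hu j) x) (da (contDiff_pd (hξ k) j) x) m

end

lemma pd_zero {x : Fin n → ℝ} (j : Fin n) : pd j (fun _ => (0:ℝ)) x = 0 := by
  simp [pd]

lemma pd_comm {f : (Fin n → ℝ) → ℝ} (hf : ContDiff ℝ (⊤ : ℕ∞) f) (i j : Fin n) (x : Fin n → ℝ) :
    pd i (pd j f) x = pd j (pd i f) x := by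
  have hsym : IsSymmSndFDerivAt ℝ f x := hf.contDiffAt.isSymmSndFDerivAt (by rw [minSmoothness_of_isRCLikeNormedField]; exact WithTop.coe_le_coe.mpr (le_top : (2:ℕ∞) ≤ ⊤))
  have key : ∀ a b : Fin n, pd a (pd b f) x
      = fderiv ℝ (fderiv ℝ f) x (Pi.single a 1) (Pi.single b 1) := by
    intro a b
    have hd : DifferentiableAt ℝ (fderiv ℝ f) x :=
      ((hf.fderiv_right (m := 1) (WithTop.coe_le_coe.mpr le_top)).differentiable one_ne_zero).differentiableAt
    show pd a (fun y => (fderiv ℝ f y) (Pi.single b 1)) x = _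
    simp [pd, fderiv_clm_apply hd (differentiableAt_const _)]
  rw [key, key, hsym]


section perms
variable {n : ℕ}

lemma t2 (f : Fin n → Fin n → ℝ) : (∑ a, ∑ b, f a b) = ∑ a, ∑ b, f b a :=
  Finset.sum_comm

lemma t3_213 (f : Fin n → Fin n → Fin n → ℝ) :
    (∑ a, ∑ b, ∑ c, f a b c) = ∑ a, ∑ b, ∑ c, f b a c := Finset.sum_comm

lemma t3_132 (f : Fin n → Fin n → Fin n → ℝ) :
    (∑ a, ∑ b, ∑ c, f a b c) = ∑ a, ∑ b, ∑ c, f a c b :=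
  Finset.sum_congr rfl fun _ _ => Finset.sum_comm

lemma t3_231 (f : Fin n → Fin n → Fin n → ℝ) :
    (∑ a, ∑ b, ∑ c, f a b c) = ∑ a, ∑ b, ∑ c, f b c a :=
  (t3_132 f).trans (t3_213 (fun a b c => f a c b))

lemma t3_312 (f : Fin n → Fin n → Fin n → ℝ) :
    (∑ a, ∑ b, ∑ c, f a b c) = ∑ a, ∑ b, ∑ c, f c a b :=
  (t3_213 f).trans (t3_132 (fun a b c => f b a c))

lemma t3_321 (f : Fin n → Fin n → Fin n → ℝ) :
    (∑ a, ∑ b, ∑ c, f a b c) = ∑ a, ∑ b, ∑ c, f c b a :=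
  (t3_231 f).trans (t3_132 (fun a b c => f b c a))

lemma s4ab (f : Fin n → Fin n → Fin n → Fin n → ℝ) :
    (∑ a, ∑ b, ∑ c, ∑ d, f a b c d) = ∑ a, ∑ b, ∑ c, ∑ d, f b a c d := Finset.sum_comm

lemma s4bc (f : Fin n → Fin n → Fin n → Fin n → ℝ) :
    (∑ a, ∑ b, ∑ c, ∑ d, f a b c d) = ∑ a, ∑ b, ∑ c, ∑ d, f a c b d :=
  Finset.sum_congr rfl fun _ _ => Finset.sum_comm

lemma s4cd (f : Fin n → Fin n → Fin n → Fin n → ℝ) :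
    (∑ a, ∑ b, ∑ c, ∑ d, f a b c d) = ∑ a, ∑ b, ∑ c, ∑ d, f a b d c :=
  Finset.sum_congr rfl fun _ _ => Finset.sum_congr rfl fun _ _ => Finset.sum_comm

lemma t4cadb (f : Fin n → Fin n → Fin n → Fin n → ℝ) :
    (∑ a, ∑ b, ∑ c, ∑ d, f a b c d) = ∑ a, ∑ b, ∑ c, ∑ d, f c a d b := by
  exact ((s4ab (fun a b c d => f a b c d)).trans (s4cd (fun a b c d => f b a c d))).trans (s4bc (fun a b c d => f b a d c))

lemma t4dcba (f : Fin n → Fin n → Fin n → Fin n → ℝ) :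
    (∑ a, ∑ b, ∑ c, ∑ d, f a b c d) = ∑ a, ∑ b, ∑ c, ∑ d, f d c b a := by
  exact ((((((s4ab (fun a b c d => f a b c d)).trans (s4bc (fun a b c d => f b a c d))).trans (s4ab (fun a b c d => f c a b d))).trans (s4cd (fun a b c d => f c b a d))).trans (s4bc (fun a b c d => f d b a c))).trans (s4ab (fun a b c d => f d c a b)))


end perms

set_option maxHeartbeats 2000000 in
lemma master' {n : ℕ} (U X : Fin n → ℝ) (G : Fin n → Fin n → Fin n → ℝ)
    (dU dX : Fin n → Fin n → ℝ) (dG : Fin n → Fin n → Fin n → Fin n → ℝ)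
    (ddU ddX : Fin n → Fin n → Fin n → ℝ) (k : Fin n) :
    (∑ j, U j * ((∑ i, (dU i j * (dX k i + ∑ m, G k m i * X m)
        + U i * (ddX k i j + ∑ m, (dG k m i j * X m + G k m i * dX m j))))
      + ∑ q, G k q j * ∑ p, U p * (dX q p + ∑ m, G q m p * X m)))
    =
    ((∑ i, ∑ j, ∑ l, (dG k i l j - dG k i j l + ∑ m, G m i l * G k m j
        - ∑ m, G m i j * G k m l) * U i * U j * X l)
      + (∑ a, U a *
          ((∑ j, ∑ l, (((dG k l j a - dG k j l a) * U j
              + (G k l j - G k j l) * dU j a) * X l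
            + (G k l j - G k j l) * U j * dX l a))
          - ((∑ j, (dX j a * dU k j + X j * ddU k j a))
            - (∑ j, (dU j a * dX k j + U j * ddX k j a)))
          + (∑ q, G k q a * ((∑ p, ∑ r, (G q r p - G q p r) * U p * X r)
            - ((∑ j, X j * dU q j) - (∑ j, U j * dX q j))))))
      - (∑ i, (dU k i + ∑ m, G k m i * U m)
          * ((∑ j, X j * dU i j) - (∑ j, U j * dX i j))))
    + ((∑ l, X l * (∑ i, (dU i l * (dU k i + ∑ m, G k m i * U m)
          + U i * (ddU k i l + ∑ m, (dG k m i l * U m + G k m i * dU m l)))))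
      + (∑ q, ∑ l, G k q l * X l * (∑ j, U j * (dU q j + ∑ m, G q m j * U m)))
      + (∑ i, ∑ j, U i * X j * (ddU k j i - ddU k i j))) := by
  simp only [mul_add, add_mul, mul_sub, sub_mul, Finset.mul_sum, Finset.sum_mul,
    Finset.sum_add_distrib, Finset.sum_sub_distrib]
  ring_nf
  have e0 : (∑ a, ∑ b, ∑ c, U a * dU b a * G k c b * X c) = (∑ a, ∑ b, ∑ c, U a * G k c b * dU b a * X c) :=
    Finset.sum_congr rfl fun a _ => Finset.sum_congr rfl fun b _ => Finset.sum_congr rfl fun c _ => by ring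
  have e1 : (∑ a, ∑ b, ∑ c, U a * U b * dG k c b a * X c) = (∑ a, ∑ b, ∑ c, U a * dG k c b a * U b * X c) :=
    Finset.sum_congr rfl fun a _ => Finset.sum_congr rfl fun b _ => Finset.sum_congr rfl fun c _ => by ring
  have e2 : (∑ a, ∑ b, ∑ c, U a * U b * G k c b * dX c a) = (∑ a, ∑ b, ∑ c, U a * G k c b * U b * dX c a) :=
    Finset.sum_congr rfl fun a _ => Finset.sum_congr rfl fun b _ => Finset.sum_congr rfl fun c _ => by ring
  have e3 : (∑ a, ∑ b, ∑ c, dG k a c b * U a * U b * X c) = (∑ a, ∑ b, ∑ c, U a * dG k b c a * U b * X c) :=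
    (t3_213 (fun a b c => dG k a c b * U a * U b * X c)).trans (Finset.sum_congr rfl fun a _ => Finset.sum_congr rfl fun b _ => Finset.sum_congr rfl fun c _ => by ring)
  have e4 : (∑ a, ∑ b, ∑ c, dG k a b c * U a * U b * X c) = (∑ a, ∑ b, ∑ c, X a * U b * dG k c b a * U c) :=
    (t3_321 (fun a b c => dG k a b c * U a * U b * X c)).trans (Finset.sum_congr rfl fun a _ => Finset.sum_congr rfl fun b _ => Finset.sum_congr rfl fun c _ => by ring)
  have e5 : (∑ a, ∑ b, ∑ c, ∑ i, G i a c * G k i b * U a * U b * X c) = (∑ a, ∑ b, ∑ c, ∑ d, U a * G k b a * G b c d * U c * X d) :=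
    (t4cadb (fun a b c i => G i a c * G k i b * U a * U b * X c)).trans (Finset.sum_congr rfl fun a _ => Finset.sum_congr rfl fun b _ => Finset.sum_congr rfl fun c _ => Finset.sum_congr rfl fun i _ => by ring)
  have e6 : (∑ a, ∑ b, ∑ c, ∑ i, G i a b * G k i c * U a * U b * X c) = (∑ a, ∑ b, ∑ c, ∑ d, G k a b * X b * U c * G a d c * U d) :=
    (t4dcba (fun a b c i => G i a b * G k i c * U a * U b * X c)).trans (Finset.sum_congr rfl fun a _ => Finset.sum_congr rfl fun b _ => Finset.sum_congr rfl fun c _ => Finset.sum_congr rfl fun i _ => by ring)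
  have e7 : (∑ a, ∑ b, U a * X b * ddU k a b) = (∑ a, ∑ b, X a * U b * ddU k b a) :=
    (t2 (fun a b => U a * X b * ddU k a b)).trans (Finset.sum_congr rfl fun a _ => Finset.sum_congr rfl fun b _ => by ring)
  have e8 : (∑ a, ∑ b, ∑ c, U a * G k b c * dU b a * X c) = (∑ a, ∑ b, ∑ c, G k a b * X b * U c * dU a c) :=
    (t3_312 (fun a b c => U a * G k b c * dU b a * X c)).trans (Finset.sum_congr rfl fun a _ => Finset.sum_congr rfl fun b _ => Finset.sum_congr rfl fun c _ => by ring)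
  have e9 : (∑ a, ∑ b, ∑ c, U a * G k b c * U b * dX c a) = (∑ a, ∑ b, ∑ c, G k c a * U c * U b * dX a b) :=
    (t3_231 (fun a b c => U a * G k b c * U b * dX c a)).trans (Finset.sum_congr rfl fun a _ => Finset.sum_congr rfl fun b _ => Finset.sum_congr rfl fun c _ => by ring)
  have e10 : (∑ a, ∑ b, U a * dX b a * dU k b) = (∑ a, ∑ b, dU k a * U b * dX a b) :=
    (t2 (fun a b => U a * dX b a * dU k b)).trans (Finset.sum_congr rfl fun a _ => Finset.sum_congr rfl fun b _ => by ring)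
  have e11 : (∑ a, ∑ b, ∑ c, U a * G k b a * X c * dU b c) = (∑ a, ∑ b, ∑ c, X a * U b * G k c b * dU c a) :=
    (t3_231 (fun a b c => U a * G k b a * X c * dU b c)).trans (Finset.sum_congr rfl fun a _ => Finset.sum_congr rfl fun b _ => Finset.sum_congr rfl fun c _ => by ring)
  have e12 : (∑ a, ∑ b, dU k a * X b * dU a b) = (∑ a, ∑ b, X a * dU b a * dU k b) :=
    (t2 (fun a b => dU k a * X b * dU a b)).trans (Finset.sum_congr rfl fun a _ => Finset.sum_congr rfl fun b _ => by ring)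
  have e13 : (∑ a, ∑ b, ∑ c, G k c a * U c * X b * dU a b) = (∑ a, ∑ b, ∑ c, X a * dU b a * G k c b * U c) :=
    (t3_213 (fun a b c => G k c a * U c * X b * dU a b)).trans (Finset.sum_congr rfl fun a _ => Finset.sum_congr rfl fun b _ => Finset.sum_congr rfl fun c _ => by ring)
  have e14 : (∑ a, ∑ b, ∑ c, ∑ d, U a * G k b a * U c * G b d c * X d) = (∑ a, ∑ b, ∑ c, ∑ d, U a * G k b a * G b d c * U c * X d) :=
    Finset.sum_congr rfl fun a _ => Finset.sum_congr rfl fun b _ => Finset.sum_congr rfl fun c _ => Finset.sum_congr rfl fun d _ => by ring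
  linear_combination (norm := (ring_nf; simp only [mul_comm, mul_assoc, mul_left_comm]; ring_nf)) e0 + e1 + e2 - e3 + e4 - e5 + e6 + e7 + e8 + e9 + e10 + e11 + e12 + e13 + e14
--needed4: R4 R17 ('c', 'a', 'd', 'b')
--needed4: R5 R29 ('d', 'c', 'b', 'a')

set_option maxHeartbeats 1000000 in
lemma master {n : ℕ} (U X : Fin n → ℝ) (G : Fin n → Fin n → Fin n → ℝ)
    (dU dX : Fin n → Fin n → ℝ) (dG : Fin n → Fin n → Fin n → Fin n → ℝ)
    (ddU ddX : Fin n → Fin n → Fin n → ℝ)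
    (hsym : ∀ k a b, ddU k a b = ddU k b a)
    (hgeo : ∀ k, ∑ j, U j * (dU k j + ∑ m, G k m j * U m) = 0)
    (hdgeo : ∀ k l, (∑ i, (dU i l * (dU k i + ∑ m, G k m i * U m)
      + U i * (ddU k i l + ∑ m, (dG k m i l * U m + G k m i * dU m l)))) = 0)
    (k : Fin n) :
    (∑ j, U j * ((∑ i, (dU i j * (dX k i + ∑ m, G k m i * X m)
        + U i * (ddX k i j + ∑ m, (dG k m i j * X m + G k m i * dX m j))))
      + ∑ q, G k q j * ∑ p, U p * (dX q p + ∑ m, G q m p * X m)))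
    =
    ((∑ i, ∑ j, ∑ l, (dG k i l j - dG k i j l + ∑ m, G m i l * G k m j
        - ∑ m, G m i j * G k m l) * U i * U j * X l)
      + (∑ a, U a *
          ((∑ j, ∑ l, (((dG k l j a - dG k j l a) * U j
              + (G k l j - G k j l) * dU j a) * X l
            + (G k l j - G k j l) * U j * dX l a))
          - ((∑ j, (dX j a * dU k j + X j * ddU k j a))
            - (∑ j, (dU j a * dX k j + U j * ddX k j a)))
          + (∑ q, G k q a * ((∑ p, ∑ r, (G q r p - G q p r) * U p * X r)
            - ((∑ j, X j * dU q j) - (∑ j, U j * dX q j))))))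
      - (∑ i, (dU k i + ∑ m, G k m i * U m)
          * ((∑ j, X j * dU i j) - (∑ j, U j * dX i j)))) := by
  rw [master' U X G dU dX dG ddU ddX k]
  have h3 : (∑ i, ∑ j, U i * X j * (ddU k j i - ddU k i j)) = 0 := by
    refine Finset.sum_eq_zero fun i _ => Finset.sum_eq_zero fun j _ => ?_
    rw [hsym k j i]; ring
  rw [h3]
  simp [hdgeo, hgeo]

end GD

/-- geodesic deviation equation.  If `u` is autoparallel
(`u^j u^k_{|j} = 0`), then
`u^j (u^i ξ^k_{|i})_{|j} = R^k_{ijl} u^i u^j ξ^l + u^n (W^k)_{|n} − u^k_{|i} (£_ξ u)^i`,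
where `W^k := T^k_{jl} u^j ξ^l − (£_ξ u)^k`. -/
theorem geodesic_deviation {n : ℕ} (hn : 0 < n)
    (Γ : Fin n → Fin n → Fin n → (Fin n → ℝ) → ℝ)
    (u ξ : Fin n → (Fin n → ℝ) → ℝ)
    (hΓ : ∀ k i j, ContDiff ℝ (⊤ : ℕ∞) (Γ k i j))
    (hu : ∀ k, ContDiff ℝ (⊤ : ℕ∞) (u k))
    (hξ : ∀ k, ContDiff ℝ (⊤ : ℕ∞) (ξ k))
    (hgeo : ∀ (x : Fin n → ℝ) (k : Fin n), (∑ j, u j x * covV Γ u k j x) = 0) :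
    ∀ (x : Fin n → ℝ) (k : Fin n),
      (∑ j, u j x * covV Γ (fun k y => ∑ i, u i y * covV Γ ξ k i y) k j x) =
        (∑ i, ∑ j, ∑ l, curv Γ k i j l x * u i x * u j x * ξ l x)
          + (∑ m, u m x * covV Γ
              (fun k y => (∑ j, ∑ l, tor Γ k j l y * u j y * ξ l y) - lieV ξ u k y)
              k m x)
          - (∑ i, covV Γ u k i x * lieV ξ u i x) := by
  intro x k
  simp only [covV, curv, tor, lieV]
  simp only [GD.pd_ucov hΓ hu hξ, GD.pd_W hΓ hu hξ]
  have hzero : ∀ k, (fun y => ∑ j, u j y * (pd j (u k) y + ∑ m, Γ k m j y * u m y))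
      = (fun _ => (0:ℝ)) := by
    intro k; funext y; simpa [covV] using hgeo y k
  have hgeo' : ∀ k, ∑ j, u j x * (pd j (u k) x + ∑ m, Γ k m j x * u m x) = 0 := by
    intro k; simpa [covV] using hgeo x k
  have hdgeo' : ∀ k l, (∑ i, (pd l (u i) x * (pd i (u k) x + ∑ m, Γ k m i x * u m x)
      + u i x * (pd l (pd i (u k)) x
        + ∑ m, (pd l (Γ k m i) x * u m x + Γ k m i x * pd l (u m) x)))) = 0 := by
    intro k' l
    rw [← GD.pd_ucov hΓ hu hu k' l x, hzero k']
    exact GD.pd_zero l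
  have hsym' : ∀ (a b c : Fin n), pd c (pd b (u a)) x = pd b (pd c (u a)) x :=
    fun a b c => GD.pd_comm (hu a) c b x
  exact GD.master (fun i => u i x) (fun i => ξ i x) (fun a b c => Γ a b c x)
    (fun i a => pd a (u i) x) (fun i a => pd a (ξ i) x)
    (fun a b c d => pd d (Γ a b c) x)
    (fun a b c => pd c (pd b (u a)) x) (fun a b c => pd c (pd b (ξ a)) x)
    hsym' hgeo' hdgeo' k
end
end
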